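/- For every integer m ≥ 3, the function f_m(x) = 2^{4m+1} − (9/13)^x·13^m − (2·(9/10)^x − (2/5)^x)·10^m is strictly increasing on the interval [0, m]. Consequently, for distinct integers m₁, m₁′ ∈ {0,1,…,m}, the values 2^{4m+1} − 3^{2m₁}·13^{m−m₁} − (2·3^{2m₁} − 2^{2m₁})·10^{m−m₁} are pairwise distinct. -/

import Mathlib

/-! For `x ≥ 0`, `(2/5)^x` is the smallest of the three exponentials and `13^m ≥ 2·10^m` for
`m ≥ 3`, so the derivative of `f_m` is at least
`10^m (2/5)^x (2 log(13/9) + 2 log(10/9) - log(5/2))`, which is positive because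
`(13·10/81)^2 > 5/2`. At an integer `x = m₁ ≤ m`, `f_m` takes the integer value of the second
claim. -/

open Real

noncomputable def fm (m : ℕ) (x : ℝ) : ℝ :=
  2 ^ (4 * m + 1) - (9 / 13 : ℝ) ^ x * 13 ^ m -
    (2 * (9 / 10 : ℝ) ^ x - (2 / 5 : ℝ) ^ x) * 10 ^ m

noncomputable def fmDeriv (m : ℕ) (x : ℝ) : ℝ :=
  13 ^ m * (9 / 13 : ℝ) ^ x * log (13 / 9) +
    10 ^ m * (2 * (9 / 10 : ℝ) ^ x * log (10 / 9) - (2 / 5 : ℝ) ^ x * log (5 / 2))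

lemma two_mul_ten_pow_le_thirteen_pow {m : ℕ} (hm : 3 ≤ m) : 2 * 10 ^ m ≤ 13 ^ m := by
  induction m, hm using Nat.le_induction with
  | base => norm_num
  | succ n _ ih => rw [pow_succ, pow_succ]; omega

lemma log_five_halves_lt : log (5 / 2) < 2 * log (13 / 9) + 2 * log (10 / 9) := by
  have hsplit : 2 * log (13 / 9) + 2 * log (10 / 9) = log ((13 / 9) ^ 2 * (10 / 9) ^ 2) := by
    rw [log_mul (by positivity) (by positivity), log_pow, log_pow]
    push_cast
    ring
  rw [hsplit]
  exact log_lt_log (by norm_num) (by norm_num)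

lemma log_div_eq_neg_log_div {a b : ℝ} : log (a / b) = -log (b / a) := by
  rw [← log_inv, inv_div]

lemma hasDerivAt_fm (m : ℕ) (x : ℝ) : HasDerivAt (fm m) (fmDeriv m x) x := by
  have hd : ∀ {c : ℝ}, 0 < c → HasDerivAt (fun y : ℝ => c ^ y) (c ^ x * log c) x :=
    fun hc => (hasStrictDerivAt_const_rpow hc x).hasDerivAt
  have := ((hasDerivAt_const x ((2 : ℝ) ^ (4 * m + 1))).sub
    ((hd (c := 9 / 13) (by norm_num)).mul_const ((13 : ℝ) ^ m))).sub
    ((((hd (c := 9 / 10) (by norm_num)).const_mul 2).sub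
      (hd (c := 2 / 5) (by norm_num))).mul_const ((10 : ℝ) ^ m))
  refine this.congr_deriv ?_
  rw [fmDeriv, log_div_eq_neg_log_div (a := 9), log_div_eq_neg_log_div (a := 9),
    log_div_eq_neg_log_div (a := 2)]
  ring

lemma fmDeriv_pos {m : ℕ} (hm : 3 ≤ m) {x : ℝ} (hx : 0 ≤ x) : 0 < fmDeriv m x := by
  have h13 : 2 * (10 : ℝ) ^ m ≤ 13 ^ m := by exact_mod_cast two_mul_ten_pow_le_thirteen_pow hm
  have hle₁ : (2 / 5 : ℝ) ^ x ≤ (9 / 13) ^ x := rpow_le_rpow (by norm_num) (by norm_num) hx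
  have hle₂ : (2 / 5 : ℝ) ^ x ≤ (9 / 10) ^ x := rpow_le_rpow (by norm_num) (by norm_num) hx
  have hL₁ : 0 < log (13 / 9) := log_pos (by norm_num)
  have hL₂ : 0 < log (10 / 9) := log_pos (by norm_num)
  have hc : 0 < (2 / 5 : ℝ) ^ x := rpow_pos_of_pos (by norm_num) x
  have h10 : (0 : ℝ) < 10 ^ m := by positivity
  calc 0 < 10 ^ m * (2 / 5 : ℝ) ^ x * (2 * log (13 / 9) + 2 * log (10 / 9) - log (5 / 2)) := by
        have hgap : 0 < 2 * log (13 / 9) + 2 * log (10 / 9) - log (5 / 2) := by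
          linarith [log_five_halves_lt]
        positivity
    _ ≤ fmDeriv m x := by
        have hterm₁ : 2 * 10 ^ m * (2 / 5 : ℝ) ^ x * log (13 / 9) ≤
            13 ^ m * (9 / 13 : ℝ) ^ x * log (13 / 9) := by
          gcongr
        have hterm₂ : 10 ^ m * (2 * (2 / 5 : ℝ) ^ x * log (10 / 9)) ≤
            10 ^ m * (2 * (9 / 10 : ℝ) ^ x * log (10 / 9)) := by
          gcongr
        unfold fmDeriv
        linarith

lemma strictMonoOn_fm {m : ℕ} (hm : 3 ≤ m) : StrictMonoOn (fm m) (Set.Icc 0 m) := by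
  refine strictMonoOn_of_deriv_pos (convex_Icc _ _)
    (fun x _ => (hasDerivAt_fm m x).continuousAt.continuousWithinAt) fun x hx => ?_
  rw [interior_Icc] at hx
  rw [(hasDerivAt_fm m x).deriv]
  exact fmDeriv_pos hm hx.1.le

lemma div_pow_mul_pow_of_le {K : Type*} [Semifield K] {a b : K} (hb : b ≠ 0) {k m : ℕ}
    (hk : k ≤ m) :
    (a / b) ^ k * b ^ m = a ^ k * b ^ (m - k) := by
  rw [pow_sub₀ _ hb hk, div_pow]
  field_simp

lemma fm_natCast {m k : ℕ} (hk : k ≤ m) :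
    fm m k = ((2 ^ (4 * m + 1) - 3 ^ (2 * k) * 13 ^ (m - k) -
      (2 * 3 ^ (2 * k) - 2 ^ (2 * k)) * 10 ^ (m - k) : ℤ) : ℝ) := by
  have h13 := div_pow_mul_pow_of_le (a := (9 : ℝ)) (by norm_num : (13 : ℝ) ≠ 0) hk
  have h10 := div_pow_mul_pow_of_le (a := (9 : ℝ)) (by norm_num : (10 : ℝ) ≠ 0) hk
  have h4 := div_pow_mul_pow_of_le (a := (4 : ℝ)) (by norm_num : (10 : ℝ) ≠ 0) hk
  rw [show (4 : ℝ) / 10 = 2 / 5 by norm_num] at h4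
  simp only [fm, rpow_natCast]
  push_cast
  rw [pow_mul, pow_mul]
  norm_num at h13 h10 h4 ⊢
  linear_combination -h13 - 2 * h10 + h4

theorem stmt19 (m : ℕ) (hm : 3 ≤ m) :
    StrictMonoOn
      (fun x : ℝ =>
        2 ^ (4 * m + 1) - (9 / 13 : ℝ) ^ x * 13 ^ m -
          (2 * (9 / 10 : ℝ) ^ x - (2 / 5 : ℝ) ^ x) * 10 ^ m)
      (Set.Icc (0 : ℝ) (m : ℝ)) ∧
    ∀ m₁ m₁' : ℕ, m₁ ≤ m → m₁' ≤ m → m₁ ≠ m₁' →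
      (2 ^ (4 * m + 1) - 3 ^ (2 * m₁) * 13 ^ (m - m₁) -
          (2 * 3 ^ (2 * m₁) - 2 ^ (2 * m₁)) * 10 ^ (m - m₁) : ℤ) ≠
        2 ^ (4 * m + 1) - 3 ^ (2 * m₁') * 13 ^ (m - m₁') -
          (2 * 3 ^ (2 * m₁') - 2 ^ (2 * m₁')) * 10 ^ (m - m₁') := by
  refine ⟨strictMonoOn_fm hm, fun m₁ m₁' h₁ h₁' hne heq => hne ?_⟩
  have hmem : ∀ {k : ℕ}, k ≤ m → (k : ℝ) ∈ Set.Icc (0 : ℝ) m :=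
    fun hk => ⟨Nat.cast_nonneg _, Nat.cast_le.mpr hk⟩
  refine Nat.cast_injective ((strictMonoOn_fm hm).injOn (hmem h₁) (hmem h₁') ?_)
  rw [fm_natCast h₁, fm_natCast h₁', heq]
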